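/- In the automaton group of automaton 2402, the element c has infinite order: c^n(10^∞) is left-shift equivalent to 0^∞ for all n ≥ 0 (using that x|_{00} = c for every x ∈ {a,b,c}), while c^{-2}(10^∞) = 101^∞. -/

import Mathlib

/-!
A state `q` of a Mealy automaton acts on `u z` as `q(u z) = q(u) q|ᵤ(z)`, where the section
`q|ᵤ` is the state reached from `q` after reading `u`. In automaton 2402 every state reaches `c`
after reading `00`, and `c` fixes `0^∞`; hence every generator sends a word ending in `0^∞` to
another such word, and in particular so does every power `cⁿ`. On the other hand
`c⁻²(10^∞) = 101^∞` does not end in `0^∞`. If `cⁿ = 1` with `n ≥ 1`, then `c⁻² = c²⁽ⁿ⁻¹⁾`,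
which is impossible.
-/

namespace Stmt17


/-- A Mealy automaton over the binary alphabet with state set `S`. -/
structure Mealy (S : Type) where
  /-- transition function -/
  δ : S → Bool → S
  /-- output function -/
  τ : S → Bool → Bool

namespace Mealy

variable {S : Type} (M : Mealy S)

/-- The state reached from `q` after reading the first `n` letters of `w`. -/
def stateAt (q : S) (w : ℕ → Bool) : ℕ → S
  | 0 => q
  | n + 1 => M.δ (stateAt q w n) (w n)

/-- The action of state `q` on infinite words. -/
def act (q : S) (w : ℕ → Bool) : ℕ → Bool :=
  fun n => M.τ (M.stateAt q w n) (w n)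

/-- The inverse automaton (for automata whose output functions are involutions). -/
def inv : Mealy S := ⟨fun q b => M.δ q (M.τ q b), M.τ⟩

theorem stateAt_inv_act (h : ∀ q b, M.τ q (M.τ q b) = b) (q : S) (w : ℕ → Bool) :
    ∀ n, M.inv.stateAt q (M.act q w) n = M.stateAt q w n := by
  intro n
  induction n with
  | zero => rfl
  | succ n ih =>
    show M.inv.δ (M.inv.stateAt q (M.act q w) n) (M.act q w n) = M.δ (M.stateAt q w n) (w n)
    rw [ih]
    show M.δ (M.stateAt q w n) (M.τ (M.stateAt q w n) (M.τ (M.stateAt q w n) (w n))) = _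
    rw [h]

theorem inv_act (h : ∀ q b, M.τ q (M.τ q b) = b) (q : S) (w : ℕ → Bool) :
    M.inv.act q (M.act q w) = w := by
  funext n
  show M.inv.τ (M.inv.stateAt q (M.act q w) n) (M.act q w n) = w n
  rw [stateAt_inv_act M h]
  show M.τ (M.stateAt q w n) (M.τ (M.stateAt q w n) (w n)) = w n
  rw [h]

theorem inv_inv (h : ∀ q b, M.τ q (M.τ q b) = b) : M.inv.inv = M := by
  obtain ⟨d, t⟩ := M
  simp only [inv]
  congr 1
  funext q b
  exact congrArg (d q) (h q b)

/-- The permutation of the set of infinite binary words defined by state `q`. -/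
def perm (h : ∀ q b, M.τ q (M.τ q b) = b) (q : S) : Equiv.Perm (ℕ → Bool) where
  toFun := M.act q
  invFun := M.inv.act q
  left_inv := fun w => M.inv_act h q w
  right_inv := fun w => by
    have h2 : ∀ q b, M.inv.τ q (M.inv.τ q b) = b := h
    have := M.inv.inv_act h2 q w
    rwa [M.inv_inv h] at this

end Mealy

/-- Prepend a finite word to an infinite word. -/
def cat (u : List Bool) (w : ℕ → Bool) : ℕ → Bool :=
  fun n => u.getD n (w (n - u.length))

/-- The (semantic) restriction of a transformation of infinite words to the
subtree indexed by the finite word `u`. -/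
def resW (f : (ℕ → Bool) → ℕ → Bool) (u : List Bool) : (ℕ → Bool) → ℕ → Bool :=
  fun w n => f (cat u w) (n + u.length)

/-- The periodic infinite word with period `u`. -/
def per (u : List Bool) : ℕ → Bool := fun n => u.getD (n % u.length) false

/-- Left-shift equivalence of infinite words: they share a common infinite tail. -/
def seq (u v : ℕ → Bool) : Prop := ∃ k l : ℕ, ∀ n, u (n + k) = v (n + l)

inductive St : Type
  | a | b | c
deriving DecidableEq

instance : Fintype St where
  elems := {.a, .b, .c}
  complete := fun x => by cases x <;> simp

/-- Automaton 2402. -/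
def M : Mealy St where
  δ := fun q x => match q, x with
    | .a, false => .b | .a, true => .c
    | .b, false => .c | .b, true => .b
    | .c, false => .c | .c, true => .a
  τ := fun q x => match q with
    | .a => !x
    | .b => !x
    | .c => x

theorem M_inv : ∀ q x, M.τ q (M.τ q x) = x := by decide

/-- The automorphism of the binary tree boundary defined by state `a`. -/
def a : Equiv.Perm (ℕ → Bool) := M.perm M_inv .a

/-- The automorphism of the binary tree boundary defined by state `b`. -/
def b : Equiv.Perm (ℕ → Bool) := M.perm M_inv .b

/-- The automorphism of the binary tree boundary defined by state `c`. -/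
def c : Equiv.Perm (ℕ → Bool) := M.perm M_inv .c

theorem cat_cons_zero (x : Bool) (u : List Bool) (w : ℕ → Bool) : cat (x :: u) w 0 = x := rfl

theorem cat_cons_succ (x : Bool) (u : List Bool) (w : ℕ → Bool) (n : ℕ) :
    cat (x :: u) w (n + 1) = cat u w n := by
  simp [cat]

theorem cat_add_length (u : List Bool) (w : ℕ → Bool) (n : ℕ) : cat u w (n + u.length) = w n := by
  simp [cat]

theorem cat_append (u v : List Bool) (w : ℕ → Bool) : cat u (cat v w) = cat (u ++ v) w := by
  induction u with
  | nil => rfl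
  | cons x u ih =>
    funext n
    cases n with
    | zero => rfl
    | succ n => rw [List.cons_append, cat_cons_succ, cat_cons_succ, ih]

theorem cat_replicate_const (k : ℕ) (x : Bool) :
    cat (List.replicate k x) (fun _ => x) = fun _ => x := by
  induction k with
  | zero => rfl
  | succ k ih =>
    funext n
    cases n with
    | zero => rfl
    | succ n => rw [List.replicate_succ, cat_cons_succ, ih]

theorem seq_cat (u : List Bool) (w : ℕ → Bool) : seq (cat u w) w :=
  ⟨u.length, 0, fun n => cat_add_length u w n⟩

theorem cat_ne_cat_of_ne {x y : Bool} (hxy : x ≠ y) (u v : List Bool) :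
    cat u (fun _ => x) ≠ cat v (fun _ => y) := fun h => hxy <| by
  simpa [Nat.add_comm, cat_add_length] using
    (cat_add_length u _ v.length).symm.trans (congrFun h (v.length + u.length))

namespace Mealy

variable {S : Type} (M : Mealy S)

def output : S → List Bool → List Bool
  | _, [] => []
  | q, x :: u => M.τ q x :: output (M.δ q x) u

@[simp]
theorem length_output (q : S) (u : List Bool) : (M.output q u).length = u.length := by
  induction u generalizing q <;> simp [output, *]

theorem stateAt_succ' (q : S) (w : ℕ → Bool) (n : ℕ) :
    M.stateAt q w (n + 1) = M.stateAt (M.δ q (w 0)) (fun i => w (i + 1)) n := by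
  induction n with
  | zero => rfl
  | succ n ih => rw [stateAt, ih]; rfl

theorem act_succ' (q : S) (w : ℕ → Bool) (n : ℕ) :
    M.act q w (n + 1) = M.act (M.δ q (w 0)) (fun i => w (i + 1)) n := by
  simp only [act, stateAt_succ']

theorem act_const {r : S} {x y : Bool} (hδ : M.δ r x = r) (hτ : M.τ r x = y) :
    M.act r (fun _ => x) = fun _ => y := by
  have hstate : ∀ n, M.stateAt r (fun _ => x) n = r := by
    intro n
    induction n with
    | zero => rfl
    | succ n ih => rw [stateAt, ih, hδ]
  funext n
  rw [act, hstate, hτ]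

theorem act_cat (q : S) (u : List Bool) (z : ℕ → Bool) :
    M.act q (cat u z) = cat (M.output q u) (M.act (u.foldl M.δ q) z) := by
  induction u generalizing q with
  | nil => rfl
  | cons x u ih =>
    funext n
    cases n with
    | zero => rfl
    | succ n =>
      have htail : (fun i => cat (x :: u) z (i + 1)) = cat u z := funext (cat_cons_succ x u z)
      rw [act_succ', cat_cons_zero, htail, ih, output, List.foldl_cons, cat_cons_succ]

theorem resW_act (q : S) (u : List Bool) : resW (M.act q) u = M.act (u.foldl M.δ q) := by
  funext w n
  rw [resW, act_cat, ← M.length_output q u, cat_add_length]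

end Mealy

theorem foldl_δ_false_false (q : St) : [false, false].foldl M.δ q = .c := by
  cases q <;> rfl

theorem act_c_zeros : M.act .c (fun _ => false) = fun _ => false :=
  M.act_const rfl rfl

theorem exists_act_cat_zeros (q : St) (u : List Bool) :
    ∃ v, M.act q (cat u fun _ => false) = cat v fun _ => false := by
  have hpad : (cat (u ++ [false, false]) fun _ => false) = cat u fun _ => false := by
    rw [← cat_append]
    exact congrArg (cat u) (cat_replicate_const 2 false)
  refine ⟨M.output q (u ++ [false, false]), ?_⟩
  rw [← hpad, M.act_cat, List.foldl_append, foldl_δ_false_false, act_c_zeros]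

theorem exists_c_pow_apply_eq_cat_zeros (n : ℕ) :
    ∃ v, ⇑(c ^ n) (cat [true] fun _ => false) = cat v fun _ => false := by
  induction n with
  | zero => exact ⟨[true], rfl⟩
  | succ n ih =>
    obtain ⟨u, hu⟩ := ih
    rw [pow_succ', Equiv.Perm.mul_apply, hu]
    exact exists_act_cat_zeros .c u

theorem c_inv_mul_c_inv_apply :
    ⇑(c⁻¹ * c⁻¹) (cat [true] fun _ => false) = cat [true, false] fun _ => true := by
  have hc : M.inv.act .c (fun _ => false) = fun _ => false := M.inv.act_const rfl rfl
  have hb : M.inv.act .b (fun _ => false) = fun _ => true := M.inv.act_const rfl rfl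
  have h10 : cat [true] (fun _ => false) = cat [true, false] fun _ => false := by
    rw [← cat_replicate_const 1 false, cat_append, cat_replicate_const]; rfl
  show M.inv.act .c (M.inv.act .c (cat [true] _)) = _
  rw [h10, M.inv.act_cat, show [true, false].foldl M.inv.δ .c = .c from rfl, hc,
    show M.inv.output .c [true, false] = [true, true] from rfl, M.inv.act_cat,
    show [true, true].foldl M.inv.δ .c = .b from rfl, hb]
  rfl

/-- In the automaton group of automaton 2402, `c` has infinite order:
`cⁿ(10^∞)` is left-shift equivalent to `0^∞` for all `n ≥ 0` (using that `x|₀₀ = c`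
for every generator `x`), while `c⁻²(10^∞) = 101^∞`. -/
theorem automaton2402_c_infinite_order :
    (∀ x ∈ ({a, b, c} : Set (Equiv.Perm (ℕ → Bool))), resW ⇑x [false, false] = ⇑c) ∧
    (∀ n : ℕ, seq (⇑(c ^ n) (cat [true] (fun _ => false))) (fun _ => false)) ∧
    (⇑(c⁻¹ * c⁻¹) (cat [true] (fun _ => false)) = cat [true, false] (fun _ => true)) ∧
    (∀ n : ℕ, 1 ≤ n → c ^ n ≠ 1) := by
  refine ⟨?_, ?_, c_inv_mul_c_inv_apply, ?_⟩
  · rintro x (rfl | rfl | rfl) <;>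
      exact (M.resW_act _ _).trans (congrArg M.act (foldl_δ_false_false _))
  · intro n
    obtain ⟨v, hv⟩ := exists_c_pow_apply_eq_cat_zeros n
    exact hv ▸ seq_cat v _
  · intro n hn hcn
    have hinv : c⁻¹ = c ^ (n - 1) :=
      (eq_inv_of_mul_eq_one_left ((pow_sub_one_mul (by omega) c).trans hcn)).symm
    obtain ⟨v, hv⟩ := exists_c_pow_apply_eq_cat_zeros (n - 1 + (n - 1))
    rw [pow_add, ← hinv, c_inv_mul_c_inv_apply] at hv
    exact cat_ne_cat_of_ne Bool.false_ne_true v [true, false] hv.symm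

end Stmt17
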